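/- Let d ≥ 1, ε₁ ∈ (0,1), t* > 0, and let T : ℝ^d × [0,t*] → ℝ satisfy (1+t)^{d/2} ‖T(·,t)‖_{L^∞(ℝ^d)} + ‖T(·,t)‖_{L¹(ℝ^d)} ≤ ε₁ for all t ∈ [0,t*]. Then there exists a constant C = C(d) such that for all t ∈ [0,t*]: ‖r(T(·,t))‖_{L^∞(ℝ^d)} ≤ C ε₁^{11} (1+t)^{−11d/2} and ‖r(T(·,t))‖_{L¹(ℝ^d)} ≤ C ε₁^{11} (1+t)^{−5d}. -/

import Mathlib

open MeasureTheory Real Set Filter ENNReal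

noncomputable section

/-- Euclidean space `ℝ^d`. -/
abbrev Rd (d : ℕ) := EuclideanSpace ℝ (Fin d)

/-- The Arrhenius reaction rate: `r(T) = exp(-1/T)` for `T > 0`, `0` otherwise. -/
noncomputable def rrate (T : ℝ) : ℝ := if 0 < T then Real.exp (-1 / T) else 0

/-- The heat semigroup `e^{tΔ}φ`, given by convolution with the heat kernel
`Φ_t(x) = (4πt)^{-d/2} exp(-|x|²/(4t))` for `t ≠ 0`, and the identity at `t = 0`. -/
noncomputable def heatConv (d : ℕ) (t : ℝ) (φ : Rd d → ℝ) : Rd d → ℝ :=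
  if t = 0 then φ
  else fun x => ∫ y : Rd d,
    (4 * Real.pi * t) ^ (-(d : ℝ) / 2) * Real.exp (-‖x - y‖ ^ 2 / (4 * t)) * φ y

/-- The Duhamel representative of the temperature at time `t`:
`e^{-λt} e^{tΔ} T₀ + ∫₀ᵗ e^{-λ(t-τ)} e^{(t-τ)Δ}[Y(·,τ) r(T(·,τ))] dτ`. -/
noncomputable def duhamelRep (d : ℕ) (lam : ℝ) (T0 : Rd d → ℝ)
    (T Y : Rd d → ℝ → ℝ) (t : ℝ) (x : Rd d) : ℝ :=
  Real.exp (-lam * t) * heatConv d t T0 x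
    + ∫ τ in Set.Ioc (0 : ℝ) t,
        Real.exp (-lam * (t - τ)) *
          heatConv d (t - τ) (fun y => Y y τ * rrate (T y τ)) x

/-- Continuity of the curve `t ↦ T(·,t)` into `L^p(ℝ^d)`, on the time set `I`. -/
def ContinuousIntoLp (d : ℕ) (p : ℝ≥0∞) (I : Set ℝ) (T : Rd d → ℝ → ℝ) : Prop :=
  ∀ t₀ ∈ I, Filter.Tendsto (fun t => eLpNorm (fun x => T x t - T x t₀) p volume)
    (nhdsWithin t₀ I) (nhds 0)

/-- A mild solution `(T, Y)` of the wildfire reaction-diffusion system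
`T_t = (Δ - λ)T + Y r(T)`, `Y_t = -β Y r(T)` with data `(T₀, Y₀)`, on the time set `I`:
the temperature satisfies the Duhamel formula (a.e. in `x`) and the fuel satisfies
`Y(x,t) = Y₀(x) exp(-β ∫₀ᵗ r(T(x,σ)) dσ)`, with both curves continuous into `L^∞`. -/
structure IsMildSolutionOn (d : ℕ) (lam beta : ℝ) (I : Set ℝ)
    (T0 Y0 : Rd d → ℝ) (T Y : Rd d → ℝ → ℝ) : Prop where
  meas_T0 : Measurable T0
  meas_Y0 : Measurable Y0
  bdd_T0 : eLpNorm T0 ⊤ volume < ⊤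
  bdd_Y0 : eLpNorm Y0 ⊤ volume < ⊤
  meas_T : ∀ t ∈ I, Measurable fun x => T x t
  meas_Y : ∀ t ∈ I, Measurable fun x => Y x t
  cont_T : ContinuousIntoLp d ⊤ I T
  cont_Y : ContinuousIntoLp d ⊤ I Y
  duhamel : ∀ t ∈ I, (fun x => T x t) =ᵐ[volume] duhamelRep d lam T0 T Y t
  fuel : ∀ x, ∀ t ∈ I,
    Y x t = Y0 x * Real.exp (-beta * ∫ σ in Set.Ioc (0 : ℝ) t, rrate (T x σ))

/-- The `X_{t*}`-norm: `sup_{t ∈ I} [(1+t)^{d/2} ‖T(·,t)‖_{L^∞} + ‖T(·,t)‖_{L¹}]`. -/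
noncomputable def XnormOn (d : ℕ) (I : Set ℝ) (T : Rd d → ℝ → ℝ) : ℝ≥0∞ :=
  ⨆ t ∈ I, (ENNReal.ofReal ((1 + t) ^ ((d : ℝ) / 2)) * eLpNorm (fun x => T x t) ⊤ volume
    + eLpNorm (fun x => T x t) 1 volume)

end

/-!
Since `exp (1 / u) ≥ (1 / u)¹¹ / 11!`, the rate satisfies `r(u) ≤ 11! |u|¹¹`. Bounding ten of the eleven
factors by `‖T‖_∞ ≤ ε₁ (1+t)^{-d/2}` leaves `r(T) ≤ 11! (ε₁ (1+t)^{-d/2})¹⁰ |T|`, whose `L^∞` and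
`L¹` norms are controlled by the `X`-norm bound.
-/

open Nat

lemma rrate_nonneg (u : ℝ) : 0 ≤ rrate u := by
  unfold rrate; split_ifs <;> positivity

lemma rrate_le_factorial_mul_pow (n : ℕ) (u : ℝ) : rrate u ≤ n ! * |u| ^ n := by
  unfold rrate
  split_ifs with hu
  · have hexp := Real.pow_div_factorial_le_exp (x := u⁻¹) (inv_pos.2 hu).le n
    rw [abs_of_pos hu, div_eq_mul_inv, neg_one_mul, Real.exp_neg]
    refine inv_le_of_inv_le₀ (by positivity) (le_of_eq_of_le ?_ hexp)
    rw [mul_inv, inv_pow, div_eq_mul_inv, mul_comm]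
  · positivity

lemma le_ofReal_div_of_ofReal_mul_le {a b : ℝ} {x : ℝ≥0∞} (ha : 0 < a)
    (h : ENNReal.ofReal a * x ≤ ENNReal.ofReal b) : x ≤ ENNReal.ofReal (b / a) := by
  rw [ENNReal.ofReal_div_of_pos ha, ENNReal.le_div_iff_mul_le (.inl (by simpa using ha)) (.inl (by simp)),
    mul_comm]
  exact h

section

variable {α : Type*} [MeasurableSpace α] {μ : Measure α}

lemma ae_abs_le_of_eLpNorm_top_le {f : α → ℝ} {B : ℝ} (hB : 0 ≤ B)
    (hf : eLpNorm f ⊤ μ ≤ ENNReal.ofReal B) : ∀ᵐ x ∂μ, |f x| ≤ B := by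
  filter_upwards [ae_le_eLpNormEssSup (f := f) (μ := μ)] with x hx
  rw [← eLpNorm_exponent_top] at hx
  have := hx.trans hf
  rwa [← ofReal_norm, ENNReal.ofReal_le_ofReal_iff hB] at this

lemma eLpNorm_rrate_comp_le (n : ℕ) {f : α → ℝ} {B : ℝ} (hB : 0 ≤ B)
    (hf : eLpNorm f ⊤ μ ≤ ENNReal.ofReal B) (p : ℝ≥0∞) :
    eLpNorm (fun x => rrate (f x)) p μ ≤ ENNReal.ofReal ((n + 1)! * B ^ n) * eLpNorm f p μ := by
  refine eLpNorm_le_mul_eLpNorm_of_ae_le_mul ?_ p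
  filter_upwards [ae_abs_le_of_eLpNorm_top_le hB hf] with x hx
  rw [Real.norm_of_nonneg (rrate_nonneg _), Real.norm_eq_abs]
  calc rrate (f x) ≤ (n + 1)! * |f x| ^ (n + 1) := rrate_le_factorial_mul_pow _ _
    _ = (n + 1)! * |f x| ^ n * |f x| := by ring
    _ ≤ (n + 1)! * B ^ n * |f x| := by gcongr

lemma eLpNorm_rrate_comp_le_of_weighted_le (n : ℕ) {f : α → ℝ} {w ε : ℝ} (hw : 0 < w)
    (hε : 0 ≤ ε) (h : ENNReal.ofReal w * eLpNorm f ⊤ μ + eLpNorm f 1 μ ≤ ENNReal.ofReal ε) :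
    eLpNorm (fun x => rrate (f x)) ⊤ μ ≤ ENNReal.ofReal ((n + 1)! * (ε / w) ^ (n + 1)) ∧
      eLpNorm (fun x => rrate (f x)) 1 μ ≤ ENNReal.ofReal ((n + 1)! * (ε / w) ^ n * ε) := by
  have hB : 0 ≤ ε / w := by positivity
  have hTop : eLpNorm f ⊤ μ ≤ ENNReal.ofReal (ε / w) :=
    le_ofReal_div_of_ofReal_mul_le hw (le_self_add.trans h)
  have hOne : eLpNorm f 1 μ ≤ ENNReal.ofReal ε := le_add_self.trans h
  constructor
  · calc _ ≤ ENNReal.ofReal ((n + 1)! * (ε / w) ^ n) * eLpNorm f ⊤ μ :=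
          eLpNorm_rrate_comp_le n hB hTop ⊤
      _ ≤ ENNReal.ofReal ((n + 1)! * (ε / w) ^ n) * ENNReal.ofReal (ε / w) := by gcongr
      _ = _ := by rw [← ENNReal.ofReal_mul (by positivity), pow_succ, mul_assoc]
  · calc _ ≤ ENNReal.ofReal ((n + 1)! * (ε / w) ^ n) * eLpNorm f 1 μ :=
          eLpNorm_rrate_comp_le n hB hTop 1
      _ ≤ ENNReal.ofReal ((n + 1)! * (ε / w) ^ n) * ENNReal.ofReal ε := by gcongr
      _ = _ := by rw [← ENNReal.ofReal_mul (by positivity)]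

end

lemma div_rpow_pow {s : ℝ} (hs : 0 ≤ s) (ε a : ℝ) (n : ℕ) :
    (ε / s ^ a) ^ n = ε ^ n * s ^ (-(n * a)) := by
  rw [div_pow, ← Real.rpow_mul_natCast hs, Real.rpow_neg hs, div_eq_mul_inv, mul_comm a]

theorem reaction_rate_decay_estimates_general (d : ℕ) :
    ∃ C : ℝ, 0 < C ∧
      ∀ (ε₁ tstar : ℝ), ε₁ ∈ Set.Ioo (0 : ℝ) 1 → 0 < tstar →
      ∀ (T : Rd d → ℝ → ℝ),
        (∀ t ∈ Set.Icc (0 : ℝ) tstar,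
          ENNReal.ofReal ((1 + t) ^ ((d : ℝ) / 2)) * eLpNorm (fun x => T x t) ⊤ volume
            + eLpNorm (fun x => T x t) 1 volume ≤ ENNReal.ofReal ε₁) →
        ∀ t ∈ Set.Icc (0 : ℝ) tstar,
          eLpNorm (fun x => rrate (T x t)) ⊤ volume
              ≤ ENNReal.ofReal (C * ε₁ ^ 11 * (1 + t) ^ (-(11 * (d : ℝ)) / 2)) ∧
          eLpNorm (fun x => rrate (T x t)) 1 volume
              ≤ ENNReal.ofReal (C * ε₁ ^ 11 * (1 + t) ^ (-(5 * (d : ℝ)))) := by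
  refine ⟨(11 : ℕ)!, by positivity, ?_⟩
  rintro ε₁ tstar ⟨hε₁, -⟩ - T hT t ht
  have ht₁ : 0 ≤ 1 + t := by linarith [ht.1]
  obtain ⟨hTop, hOne⟩ := eLpNorm_rrate_comp_le_of_weighted_le 10
    (Real.rpow_pos_of_pos (by linarith [ht.1]) _) hε₁.le (hT t ht)
  refine ⟨hTop.trans_eq ?_, hOne.trans_eq ?_⟩ <;> congr 1 <;>
    rw [div_rpow_pow ht₁]
  · ring_nf
  · rw [show -((10 : ℕ) * ((d : ℝ) / 2)) = -(5 * (d : ℝ)) by push_cast; ring]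
    ring

/-- Reaction-rate decay estimates: for `d ≥ 1` there is `C = C(d)`
such that whenever `ε₁ ∈ (0,1)`, `t* > 0` and `T : ℝ^d × [0,t*] → ℝ` satisfies
`(1+t)^{d/2} ‖T(·,t)‖_{L^∞} + ‖T(·,t)‖_{L¹} ≤ ε₁` for all `t ∈ [0,t*]`, then
`‖r(T(·,t))‖_{L^∞} ≤ C ε₁¹¹ (1+t)^{-11d/2}` and
`‖r(T(·,t))‖_{L¹} ≤ C ε₁¹¹ (1+t)^{-5d}` for all `t ∈ [0,t*]`. -/
theorem reaction_rate_decay_estimates (d : ℕ) (hd : 1 ≤ d) :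
    ∃ C : ℝ, 0 < C ∧
      ∀ (ε₁ tstar : ℝ), ε₁ ∈ Set.Ioo (0 : ℝ) 1 → 0 < tstar →
      ∀ (T : Rd d → ℝ → ℝ),
        (∀ t ∈ Set.Icc (0 : ℝ) tstar,
          ENNReal.ofReal ((1 + t) ^ ((d : ℝ) / 2)) * eLpNorm (fun x => T x t) ⊤ volume
            + eLpNorm (fun x => T x t) 1 volume ≤ ENNReal.ofReal ε₁) →
        ∀ t ∈ Set.Icc (0 : ℝ) tstar,
          eLpNorm (fun x => rrate (T x t)) ⊤ volume
              ≤ ENNReal.ofReal (C * ε₁ ^ 11 * (1 + t) ^ (-(11 * (d : ℝ)) / 2)) ∧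
          eLpNorm (fun x => rrate (T x t)) 1 volume
              ≤ ENNReal.ofReal (C * ε₁ ^ 11 * (1 + t) ^ (-(5 * (d : ℝ)))) :=
  reaction_rate_decay_estimates_general d
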